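/- arXiv:2409.13838 — 8 statements merged into one kernel-verified Lean document; each statement's English description precedes it below -/
import Mathlib

section
/- Let E be a real normed vector space, A ⊆ E, c, y, x ∈ E, ρ ≥ 0, and ε ≥ 0. Assume that for every z ∈ segment[c,y] one has closedBall(z, ρ+ε) ⊆ A, and that ‖x − c‖ ≤ ε. Then segment[x,y] ⊆ safepoly, where safepoly := {w ∈ E : ∀ v ∈ segment[c,w], closedBall(v,ρ) ⊆ A}; that is, every point on the segment from x to y lies in the safe scan polygon. -/
/-! Write a point `w` of `[x, y]` as `(1 - λ) x + λ y` and compare it with `(1 - λ) c + λ y ∈ [c, y]`: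
they differ by `(1 - λ) (x - c)`, of norm at most `ε`. Comparing `[c, w]` with `[c, w']` in the same
way, every point `v ∈ [c, w]` is within `ε` of a point `z ∈ [c, w'] ⊆ [c, y]`, so the ball of radius
`ρ` about `v` lies in the ball of radius `ρ + ε` about `z`, which lies in `A`. -/

open Metric

theorem exists_mem_segment_dist_le {E : Type*} [SeminormedAddCommGroup E] [NormedSpace ℝ E]
    {a b a' b' p : E} {d : ℝ} (ha : dist a a' ≤ d) (hb : dist b b' ≤ d)
    (hp : p ∈ segment ℝ a b) : ∃ q ∈ segment ℝ a' b', dist p q ≤ d := by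
  obtain ⟨s, t, hs, ht, hst, rfl⟩ := hp
  refine ⟨s • a' + t • b', ⟨s, t, hs, ht, hst, rfl⟩, ?_⟩
  rw [dist_eq_norm] at ha hb ⊢
  calc ‖s • a + t • b - (s • a' + t • b')‖ = ‖s • (a - a') + t • (b - b')‖ := by
        congr 1; module
    _ ≤ s * ‖a - a'‖ + t * ‖b - b'‖ := by
        refine (norm_add_le _ _).trans ?_
        rw [norm_smul_of_nonneg hs, norm_smul_of_nonneg ht]
    _ ≤ s * d + t * d := by gcongr
    _ = d := by rw [← add_mul, hst, one_mul]

theorem segment_subset_safepoly_general {E : Type*} [NormedAddCommGroup E] [NormedSpace ℝ E]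
    (A : Set E) (c y x : E) (ρ ε : ℝ) (hε : 0 ≤ ε)
    (hy : ∀ z ∈ segment ℝ c y, Metric.closedBall z (ρ + ε) ⊆ A)
    (hx : ‖x - c‖ ≤ ε) :
    segment ℝ x y ⊆ {w : E | ∀ v ∈ segment ℝ c w, Metric.closedBall v ρ ⊆ A} := by
  intro w hw v hv
  have hε₀ (p : E) : dist p p ≤ ε := by rwa [dist_self]
  obtain ⟨w', hw', hww'⟩ := exists_mem_segment_dist_le (by rwa [dist_eq_norm]) (hε₀ y) hw
  obtain ⟨z, hz, hvz⟩ := exists_mem_segment_dist_le (hε₀ c) hww' hv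
  have hzcy : z ∈ segment ℝ c y :=
    (convex_segment c y).segment_subset (left_mem_segment ℝ c y) hw' hz
  exact (closedBall_subset_closedBall' (by linarith)).trans (hy z hzcy)

/-- If the goal `y` lies in the safer scan polygon (margin `ε`) and the robot `x` is
within distance `ε` of the scan center `c`, then the whole segment from `x` to `y`
lies inside the safe scan polygon. -/
theorem segment_subset_safepoly {E : Type*} [NormedAddCommGroup E] [NormedSpace ℝ E]
    (A : Set E) (c y x : E) (ρ ε : ℝ) (hρ : 0 ≤ ρ) (hε : 0 ≤ ε)
    (hy : ∀ z ∈ segment ℝ c y, Metric.closedBall z (ρ + ε) ⊆ A)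
    (hx : ‖x - c‖ ≤ ε) :
    segment ℝ x y ⊆ {w : E | ∀ v ∈ segment ℝ c w, Metric.closedBall v ρ ⊆ A} :=
  segment_subset_safepoly_general A c y x ρ ε hε hy hx
end

section
/- Let E be a real normed vector space, let k > 0, and let p, q, x₀ ∈ E. Define x(t) := p + exp(−k·t) • (x₀ − p). Then the function t ↦ ‖x(t) − p‖ + ‖x(t) − q‖ is antitone (nonincreasing) on [0, ∞). In particular, for the move-through-scan-center policy, along the exponential motion toward the attracting point p the perimeter ‖x(t) − p‖ + ‖p − q‖ + ‖x(t) − q‖ of the triangle with vertices x(t), p, q is nonincreasing. -/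
private lemma key_ineq {E : Type*} [NormedAddCommGroup E] [NormedSpace ℝ E]
    {a b : ℝ} (ha : 0 < a) (hab : a ≤ b) (v w : E) :
    a * ‖v‖ + ‖a • v + w‖ ≤ b * ‖v‖ + ‖b • v + w‖ := by
  have h1 : a • v + w = (b • v + w) + (a - b) • v := by
    rw [sub_smul]; abel
  have h2 : ‖a • v + w‖ ≤ ‖b • v + w‖ + (b - a) * ‖v‖ := by
    rw [h1]
    calc ‖(b • v + w) + (a - b) • v‖ ≤ ‖b • v + w‖ + ‖(a - b) • v‖ := norm_add_le _ _
    _ = ‖b • v + w‖ + (b - a) * ‖v‖ := by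
        rw [norm_smul, Real.norm_eq_abs, abs_of_nonpos (by linarith), neg_sub]
  linarith

/-- Along the exponential motion `x t = p + exp(-k t) • (x₀ - p)` toward the
attracting point `p`, the sum of distances `‖x t - p‖ + ‖x t - q‖` is nonincreasing
on `[0, ∞)`; in particular the perimeter `‖x t - p‖ + ‖p - q‖ + ‖x t - q‖` of the
triangle with vertices `x t`, `p`, `q` is nonincreasing. -/
theorem exp_motion_navcost_antitone {E : Type*} [NormedAddCommGroup E] [NormedSpace ℝ E]
    (k : ℝ) (hk : 0 < k) (p q x₀ : E) :
    AntitoneOn (fun t : ℝ =>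
      ‖(p + Real.exp (-k * t) • (x₀ - p)) - p‖ +
      ‖(p + Real.exp (-k * t) • (x₀ - p)) - q‖) (Set.Ici 0) ∧
    AntitoneOn (fun t : ℝ =>
      ‖(p + Real.exp (-k * t) • (x₀ - p)) - p‖ + ‖p - q‖ +
      ‖(p + Real.exp (-k * t) • (x₀ - p)) - q‖) (Set.Ici 0) := by
  have main : AntitoneOn (fun t : ℝ =>
      ‖(p + Real.exp (-k * t) • (x₀ - p)) - p‖ +
      ‖(p + Real.exp (-k * t) • (x₀ - p)) - q‖) (Set.Ici 0) := by
    intro s _ t _ hst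
    simp only
    set a := Real.exp (-k * t) with ha
    set b := Real.exp (-k * s) with hb
    have hab : a ≤ b := Real.exp_le_exp.mpr (by nlinarith)
    have hpos : 0 < a := Real.exp_pos _
    have e1 : ∀ c : ℝ, p + c • (x₀ - p) - p = c • (x₀ - p) := fun c => by abel
    have e2 : ∀ c : ℝ, p + c • (x₀ - p) - q = c • (x₀ - p) + (p - q) := fun c => by abel
    rw [e1, e1, e2, e2, norm_smul, norm_smul, Real.norm_eq_abs, Real.norm_eq_abs,
      abs_of_pos hpos, abs_of_pos (lt_of_lt_of_le hpos hab)]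
    exact key_ineq hpos hab _ _
  refine ⟨main, ?_⟩
  intro s hs t ht hst
  have := main hs ht hst
  simp only at this ⊢
  linarith
end

section
/- Let E be a real normed vector space, let A ⊆ E be closed, let c, x₀, y ∈ E, and let ρ ≥ 0, ε > 0, k > 0. Define safepoly := {w ∈ E : ∀ z ∈ segment[c,w], closedBall(z,ρ) ⊆ A}. Assume x₀ ∈ safepoly and that for every z ∈ segment[c,y], closedBall(z, ρ+ε) ⊆ A (i.e., y lies in the safer scan polygon). Define the switching time T := 0 if segment[x₀,y] ⊆ safepoly, and T := max(0, (1/k)·log(‖x₀ − c‖/ε)) otherwise; and define the closed-loop trajectory ξ(t) := c + exp(−k·t) • (x₀ − c) for 0 ≤ t ≤ T, and ξ(t) := y + exp(−k·(t−T)) • (ξ(T) − y) for t ≥ T. Then: (i) ξ(t) ∈ safepoly for every t ≥ 0 (safety); (ii) ξ(t) tends to y as t → ∞ (convergence); and (iii) the local navigation cost t ↦ ‖ξ(t) − c‖ + ‖c − y‖ + ‖ξ(t) − y‖ is antitone (nonincreasing) on [0, ∞). -/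
private lemma aux_step {E : Type*} [NormedAddCommGroup E] [NormedSpace ℝ E]
    (p q v : E) {k s t : ℝ} (hk : 0 < k) (hst : s ≤ t) :
    ‖(p + Real.exp (-k * t) • v) - q‖ + ‖(p + Real.exp (-k * t) • v) - p‖
      ≤ ‖(p + Real.exp (-k * s) • v) - q‖ + ‖(p + Real.exp (-k * s) • v) - p‖ := by
  set a := Real.exp (-k * s) with ha
  set b := Real.exp (-k * t) with hb
  have hbpos : (0:ℝ) < b := Real.exp_pos _
  have hapos : (0:ℝ) < a := Real.exp_pos _
  have hab : b ≤ a := Real.exp_le_exp.2 (by nlinarith)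
  have h1 : ‖(p + b • v) - p‖ = b * ‖v‖ := by
    rw [add_sub_cancel_left, norm_smul, Real.norm_eq_abs, abs_of_pos hbpos]
  have h2 : ‖(p + a • v) - p‖ = a * ‖v‖ := by
    rw [add_sub_cancel_left, norm_smul, Real.norm_eq_abs, abs_of_pos hapos]
  have h3 : ‖(p + b • v) - q‖ ≤ (a - b) * ‖v‖ + ‖(p + a • v) - q‖ := by
    have htri := norm_sub_le_norm_sub_add_norm_sub (p + b • v) (p + a • v) q
    have heq : (p + b • v) - (p + a • v) = (b - a) • v := by
      rw [sub_smul]; abel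
    rw [heq, norm_smul, Real.norm_eq_abs, abs_of_nonpos (by linarith), neg_sub] at htri
    linarith
  linarith

private lemma sub_seg {E : Type*} [NormedAddCommGroup E] [NormedSpace ℝ E]
    (A : Set E) (c w : E) (ρ : ℝ)
    (hw : ∀ z ∈ segment ℝ c w, Metric.closedBall z ρ ⊆ A)
    {r : ℝ} (hr0 : 0 ≤ r) (hr1 : r ≤ 1) :
    ∀ z ∈ segment ℝ c (c + r • (w - c)), Metric.closedBall z ρ ⊆ A := by
  intro z hz
  rw [segment_eq_image'] at hz
  obtain ⟨θ, hθ, rfl⟩ := hz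
  obtain ⟨hθ0, hθ1⟩ := hθ
  apply hw
  rw [segment_eq_image']
  refine ⟨θ * r, ⟨by positivity, by nlinarith⟩, ?_⟩
  simp [smul_smul]

private lemma near_seg {E : Type*} [NormedAddCommGroup E] [NormedSpace ℝ E]
    (A : Set E) (c y w : E) (ρ ε : ℝ)
    (hy : ∀ z ∈ segment ℝ c y, Metric.closedBall z (ρ + ε) ⊆ A)
    (p : E) (hp : p ∈ segment ℝ c y) (hwp : ‖w - p‖ ≤ ε) :
    ∀ z ∈ segment ℝ c w, Metric.closedBall z ρ ⊆ A := by
  rw [segment_eq_image'] at hp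
  obtain ⟨r, ⟨hr0, hr1⟩, rfl⟩ := hp
  intro z hz
  rw [segment_eq_image'] at hz
  obtain ⟨θ, ⟨hθ0, hθ1⟩, rfl⟩ := hz
  have hp' : c + (θ * r) • (y - c) ∈ segment ℝ c y := by
    rw [segment_eq_image']
    exact ⟨θ * r, ⟨by positivity, by nlinarith⟩, rfl⟩
  intro u hu
  apply hy _ hp'
  rw [Metric.mem_closedBall, dist_eq_norm] at hu ⊢
  beta_reduce at hu hwp ⊢
  have heq : u - (c + (θ * r) • (y - c))
      = (u - (c + θ • (w - c))) + θ • (w - (c + r • (y - c))) := by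
    module
  rw [heq]
  have h2 : ‖θ • (w - (c + r • (y - c)))‖ ≤ ε := by
    rw [norm_smul, Real.norm_eq_abs, abs_of_nonneg hθ0]
    nlinarith [norm_nonneg (w - (c + r • (y - c)))]
  calc ‖_ + _‖ ≤ ‖u - (c + θ • (w - c))‖ + ‖θ • (w - (c + r • (y - c)))‖ := norm_add_le _ _
    _ ≤ ρ + ε := add_le_add hu h2

/-- Proposition 1: the move-through-scan-center policy, via its explicit closed-loop
trajectory (exponential motion toward the scan center `c` until the switching time
`T`, then exponential motion toward the goal `y`), is safe (stays in the safe scan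
polygon), converges to the goal, and nonincreases the triangle perimeter
`‖ξ t - c‖ + ‖c - y‖ + ‖ξ t - y‖`. -/
theorem move_through_scan_center_convergence {E : Type*} [NormedAddCommGroup E]
    [NormedSpace ℝ E] (A : Set E) (hA : IsClosed A) (c x₀ y : E) (ρ ε k : ℝ)
    (hρ : 0 ≤ ρ) (hε : 0 < ε) (hk : 0 < k)
    (safepoly : Set E)
    (hsafepoly : safepoly = {w : E | ∀ z ∈ segment ℝ c w, Metric.closedBall z ρ ⊆ A})
    (hx₀ : x₀ ∈ safepoly)
    (hy : ∀ z ∈ segment ℝ c y, Metric.closedBall z (ρ + ε) ⊆ A)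
    (T : ℝ)
    (hT₁ : segment ℝ x₀ y ⊆ safepoly → T = 0)
    (hT₂ : ¬ segment ℝ x₀ y ⊆ safepoly → T = max 0 ((1 / k) * Real.log (‖x₀ - c‖ / ε)))
    (ξ : ℝ → E)
    (hξ₁ : ∀ t : ℝ, 0 ≤ t → t ≤ T → ξ t = c + Real.exp (-k * t) • (x₀ - c))
    (hξ₂ : ∀ t : ℝ, T ≤ t → ξ t = y + Real.exp (-k * (t - T)) • (ξ T - y)) :
    (∀ t : ℝ, 0 ≤ t → ξ t ∈ safepoly) ∧
    Filter.Tendsto ξ Filter.atTop (nhds y) ∧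
    AntitoneOn (fun t : ℝ => ‖ξ t - c‖ + ‖c - y‖ + ‖ξ t - y‖) (Set.Ici 0) := by
  have hT0 : 0 ≤ T := by
    by_cases hcase : segment ℝ x₀ y ⊆ safepoly
    · rw [hT₁ hcase]
    · rw [hT₂ hcase]; exact le_max_left _ _
  rw [hsafepoly] at hx₀
  -- Claim C: every point y + r • (ξ T - y), r ∈ [0,1], is in the safe polygon.
  have hC : ∀ r : ℝ, 0 ≤ r → r ≤ 1 →
      ∀ z ∈ segment ℝ c (y + r • (ξ T - y)), Metric.closedBall z ρ ⊆ A := by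
    by_cases hcase : segment ℝ x₀ y ⊆ safepoly
    · have hTz := hT₁ hcase
      have hξT : ξ T = x₀ := by
        rw [hξ₁ T hT0 le_rfl, hTz]
        simp
      intro r hr0 hr1
      have hmem : y + r • (ξ T - y) ∈ segment ℝ x₀ y := by
        rw [hξT]
        have : y + r • (x₀ - y) ∈ segment ℝ y x₀ := by
          rw [segment_eq_image']
          exact ⟨r, ⟨hr0, hr1⟩, rfl⟩
        rwa [segment_symm] at this
      have := hcase hmem
      rw [hsafepoly] at this
      exact this
    · have hTe := hT₂ hcase
      have hξT : ξ T = c + Real.exp (-k * T) • (x₀ - c) := hξ₁ T hT0 le_rfl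
      have hnear : ‖ξ T - c‖ ≤ ε := by
        rw [hξT, add_sub_cancel_left, norm_smul, Real.norm_eq_abs,
          abs_of_pos (Real.exp_pos _)]
        rcases eq_or_lt_of_le (norm_nonneg (x₀ - c)) with h0 | h0
        · rw [← h0, mul_zero]; exact hε.le
        · have hkT : Real.log (‖x₀ - c‖ / ε) ≤ k * T := by
            have h1 : (1 / k) * Real.log (‖x₀ - c‖ / ε) ≤ T := by
              rw [hTe]; exact le_max_right _ _
            have := mul_le_mul_of_nonneg_left h1 hk.le
            calc Real.log (‖x₀ - c‖ / ε) = k * ((1 / k) * Real.log (‖x₀ - c‖ / ε)) := by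
                  field_simp
              _ ≤ k * T := this
          have h2 := Real.exp_le_exp.2 hkT
          rw [Real.exp_log (div_pos h0 hε)] at h2
          have h3 : ‖x₀ - c‖ ≤ Real.exp (k * T) * ε := by
            rw [div_le_iff₀ hε] at h2; exact h2
          have h4 : Real.exp (-k * T) * Real.exp (k * T) = 1 := by
            rw [← Real.exp_add]; ring_nf; exact Real.exp_zero
          nlinarith [Real.exp_pos (-k * T), Real.exp_pos (k * T)]
      intro r hr0 hr1
      have hp : y + r • (c - y) ∈ segment ℝ c y := by
        have : y + r • (c - y) ∈ segment ℝ y c := by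
          rw [segment_eq_image']
          exact ⟨r, ⟨hr0, hr1⟩, rfl⟩
        rwa [segment_symm] at this
      have hwp : ‖(y + r • (ξ T - y)) - (y + r • (c - y))‖ ≤ ε := by
        have heq : (y + r • (ξ T - y)) - (y + r • (c - y)) = r • (ξ T - c) := by
          rw [smul_sub, smul_sub, smul_sub]; abel
        rw [heq, norm_smul, Real.norm_eq_abs, abs_of_nonneg hr0]
        nlinarith [norm_nonneg (ξ T - c)]
      exact near_seg A c y _ ρ ε hy _ hp hwp
  -- Part (i): safety
  have hsafe : ∀ t : ℝ, 0 ≤ t → ξ t ∈ safepoly := by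
    intro t ht
    rw [hsafepoly]
    rcases le_or_gt t T with h | h
    · rw [hξ₁ t ht h]
      exact sub_seg A c x₀ ρ hx₀ (Real.exp_pos _).le
        (Real.exp_le_one_iff.2 (by nlinarith))
    · rw [hξ₂ t h.le]
      exact hC _ (Real.exp_pos _).le
        (Real.exp_le_one_iff.2 (by nlinarith))
  refine ⟨hsafe, ?_, ?_⟩
  -- Part (ii): convergence
  · have hev : ∀ᶠ t in Filter.atTop,
        (fun t => y + Real.exp (-k * (t - T)) • (ξ T - y)) t = ξ t :=
      Filter.eventually_atTop.2 ⟨T, fun t ht => (hξ₂ t ht).symm⟩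
    have h1 : Filter.Tendsto (fun t : ℝ => -k * (t - T)) Filter.atTop Filter.atBot := by
      have : Filter.Tendsto (fun t : ℝ => k * t) Filter.atTop Filter.atTop :=
        Filter.Tendsto.const_mul_atTop hk Filter.tendsto_id
      have h2 : Filter.Tendsto (fun t : ℝ => -(k * t)) Filter.atTop Filter.atBot :=
        Filter.tendsto_neg_atBot_iff.2 this
      have h3 := Filter.tendsto_atBot_add_const_right Filter.atTop (k * T) h2
      convert h3 using 2 with t
      ring
    have h4 : Filter.Tendsto (fun t : ℝ => Real.exp (-k * (t - T))) Filter.atTop (nhds 0) :=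
      Real.tendsto_exp_atBot.comp h1
    have h5 : Filter.Tendsto (fun t : ℝ => y + Real.exp (-k * (t - T)) • (ξ T - y))
        Filter.atTop (nhds y) := by
      have h6 : Filter.Tendsto (fun t : ℝ => Real.exp (-k * (t - T)) • (ξ T - y))
          Filter.atTop (nhds 0) := by
        simpa using h4.smul_const (ξ T - y)
      simpa using h6.const_add y
    exact h5.congr' hev
  -- Part (iii): the perimeter is nonincreasing
  · have h1 : ∀ s t : ℝ, 0 ≤ s → s ≤ t → t ≤ T →
        ‖ξ t - c‖ + ‖c - y‖ + ‖ξ t - y‖ ≤ ‖ξ s - c‖ + ‖c - y‖ + ‖ξ s - y‖ := by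
      intro s t hs hst htT
      rw [hξ₁ s hs (hst.trans htT), hξ₁ t (hs.trans hst) htT]
      have := aux_step c y (x₀ - c) hk hst
      linarith
    have h2 : ∀ s t : ℝ, T ≤ s → s ≤ t →
        ‖ξ t - c‖ + ‖c - y‖ + ‖ξ t - y‖ ≤ ‖ξ s - c‖ + ‖c - y‖ + ‖ξ s - y‖ := by
      intro s t hTs hst
      rw [hξ₂ s hTs, hξ₂ t (hTs.trans hst)]
      have := aux_step y c (ξ T - y) hk (sub_le_sub_right hst T)
      linarith
    intro s hs t ht hst
    simp only [Set.mem_Ici] at hs ht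
    rcases le_or_gt t T with h | h
    · exact h1 s t hs hst h
    · rcases le_or_gt T s with h' | h'
      · exact h2 s t h' hst
      · exact (h2 T t le_rfl h.le).trans (h1 s T hs h'.le le_rfl)
end

section
/- Let E be a real inner product space, let k > 0, α ≥ 0, y ∈ E, t₀ ∈ ℝ, and let x, g : ℝ → E be functions such that HasDerivAt x (−k • (x(t₀) − g(t₀))) t₀ and HasDerivAt g (−α • (g(t₀) − y)) t₀, with x(t₀) ≠ g(t₀) and g(t₀) ≠ y. Then the function V(s) := ‖x(s) − g(s)‖ + ‖g(s) − y‖ has a derivative v at t₀ satisfying v ≤ −k·‖x(t₀) − g(t₀)‖. In particular V is strictly decreasing at t₀. -/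
open scoped RealInnerProductSpace

/-! Write `u = x - g` and `w = g - y`, so that `V = ‖u‖ + ‖w‖`, `u̇ = -k u + α w` and
`ẇ = -α w`. Away from zero `‖·‖` has derivative `⟪u, u̇⟫ / ‖u‖`, so `‖w‖` decreases at
rate `α ‖w‖`, while by Cauchy–Schwarz `‖u‖` decreases at rate at least `k ‖u‖ - α ‖w‖`:
the motion of the projected goal towards `y` can lengthen the first leg of the path by at
most what it shortens the second one. -/

theorem HasDerivAt.norm {E : Type*} [NormedAddCommGroup E] [InnerProductSpace ℝ E]
    {f : ℝ → E} {f' : E} {t : ℝ} (hf : HasDerivAt f f' t) (h0 : f t ≠ 0) :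
    HasDerivAt (fun s => ‖f s‖) (⟪f t, f'⟫ / ‖f t‖) t := by
  have hsqrt := hf.norm_sq.sqrt (pow_ne_zero 2 (norm_ne_zero_iff.mpr h0))
  simp only [Real.sqrt_sq (norm_nonneg _)] at hsqrt
  convert hsqrt using 1
  field_simp

theorem real_inner_div_norm_le_norm {E : Type*} [NormedAddCommGroup E]
    [InnerProductSpace ℝ E] (u v : E) : ⟪u, v⟫ / ‖u‖ ≤ ‖v‖ := by
  rcases eq_or_ne u 0 with rfl | hu
  · simp
  · rw [div_le_iff₀ (norm_pos_iff.mpr hu), mul_comm]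
    exact real_inner_le_norm u v

theorem projected_goal_cost_strict_decrease_general {E : Type*} [NormedAddCommGroup E]
    [InnerProductSpace ℝ E] (k α : ℝ) (hα : 0 ≤ α) (y : E) (t₀ : ℝ)
    (x g : ℝ → E)
    (hx : HasDerivAt x (-k • (x t₀ - g t₀)) t₀)
    (hg : HasDerivAt g (-α • (g t₀ - y)) t₀)
    (hxg : x t₀ ≠ g t₀) (hgy : g t₀ ≠ y) :
    ∃ v : ℝ, HasDerivAt (fun s : ℝ => ‖x s - g s‖ + ‖g s - y‖) v t₀ ∧
      v ≤ -k * ‖x t₀ - g t₀‖ := by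
  set u := x t₀ - g t₀
  set w := g t₀ - y
  have hu : u ≠ 0 := sub_ne_zero.mpr hxg
  have hw : w ≠ 0 := sub_ne_zero.mpr hgy
  have hu_deriv : HasDerivAt (fun s => x s - g s) (-k • u - -α • w) t₀ := hx.sub hg
  refine ⟨_, (hu_deriv.norm hu).add ((hg.sub_const y).norm hw), ?_⟩
  have first_leg : ⟪u, -k • u - -α • w⟫ / ‖u‖ = -k * ‖u‖ + α * (⟪u, w⟫ / ‖u‖) := by
    rw [inner_sub_right, real_inner_smul_right, real_inner_smul_right,
      real_inner_self_eq_norm_sq]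
    field_simp
    ring
  have second_leg : ⟪w, -α • w⟫ / ‖w‖ = -α * ‖w‖ := by
    rw [real_inner_smul_right, real_inner_self_eq_norm_sq]
    field_simp
  rw [first_leg, second_leg]
  linarith [mul_le_mul_of_nonneg_left (real_inner_div_norm_le_norm u w) hα]

/-- Proposition 2 (Lyapunov decrease): if the robot `x` moves toward the projected
scan goal `g` with `ẋ = -k (x - g)` while the projected goal moves toward the goal
`y` with `ġ = -α (g - y)`, then the path length `V = ‖x - g‖ + ‖g - y‖` has a
derivative at `t₀` bounded above by `-k ‖x t₀ - g t₀‖ < 0`. -/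
theorem projected_goal_cost_strict_decrease {E : Type*} [NormedAddCommGroup E]
    [InnerProductSpace ℝ E] (k α : ℝ) (hk : 0 < k) (hα : 0 ≤ α) (y : E) (t₀ : ℝ)
    (x g : ℝ → E)
    (hx : HasDerivAt x (-k • (x t₀ - g t₀)) t₀)
    (hg : HasDerivAt g (-α • (g t₀ - y)) t₀)
    (hxg : x t₀ ≠ g t₀) (hgy : g t₀ ≠ y) :
    ∃ v : ℝ, HasDerivAt (fun s : ℝ => ‖x s - g s‖ + ‖g s - y‖) v t₀ ∧
      v ≤ -k * ‖x t₀ - g t₀‖ :=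
  projected_goal_cost_strict_decrease_general k α hα y t₀ x g hx hg hxg hgy
end

section
/- Let E be a real normed vector space, let S ⊆ E be a closed set that is star-convex with center c (c ∈ S and segment[c,w] ⊆ S for all w ∈ S), and let x, y ∈ S. Then the feasible set K := {ȳ ∈ segment[c,y] : segment[x,ȳ] ⊆ S} is nonempty (it contains c) and compact, and consequently there exists ȳ* ∈ K such that ‖ȳ* − y‖ ≤ ‖ȳ − y‖ for all ȳ ∈ K; that is, the projected scan goal—the point of segment[c,y] closest to y among those visible from x within S—exists. -/
/-- Existence of the projected scan goal: in a closed star-convex set `S` with center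
`c`, for `x, y ∈ S` the feasible set `K = {ȳ ∈ segment[c,y] : segment[x,ȳ] ⊆ S}` is
nonempty (contains `c`) and compact, so it has a point closest to the goal `y`. -/
theorem projected_scan_goal_exists {E : Type*} [NormedAddCommGroup E] [NormedSpace ℝ E]
    (S : Set E) (hS : IsClosed S) (c : E) (hc : c ∈ S)
    (hstar : ∀ w ∈ S, segment ℝ c w ⊆ S) (x y : E) (hx : x ∈ S) (hy : y ∈ S)
    (K : Set E) (hK : K = {z : E | z ∈ segment ℝ c y ∧ segment ℝ x z ⊆ S}) :
    c ∈ K ∧ IsCompact K ∧ ∃ zstar ∈ K, ∀ z ∈ K, ‖zstar - y‖ ≤ ‖z - y‖ := by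
  subst hK
  have hcK : c ∈ {z : E | z ∈ segment ℝ c y ∧ segment ℝ x z ⊆ S} := by
    refine ⟨left_mem_segment ℝ c y, ?_⟩
    rw [segment_symm]
    exact hstar x hx
  have hclosed : IsClosed {z : E | segment ℝ x z ⊆ S} := by
    have : {z : E | segment ℝ x z ⊆ S} =
        ⋂ t ∈ Set.Icc (0:ℝ) 1, (fun z : E => (1 - t) • x + t • z) ⁻¹' S := by
      ext z
      simp only [Set.mem_setOf_eq, Set.mem_iInter, Set.mem_preimage]
      constructor
      · intro h t ht
        exact h ⟨1 - t, t, by linarith [ht.1, ht.2], ht.1, by ring, rfl⟩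
      · rintro h p ⟨a, b, ha, hb, hab, rfl⟩
        have := h b ⟨hb, by linarith⟩
        have hab' : a = 1 - b := by linarith
        rwa [hab']
    rw [this]
    exact isClosed_biInter fun t _ => hS.preimage (continuous_const.add (continuous_const_smul t))
  have hKc : IsCompact {z : E | z ∈ segment ℝ c y ∧ segment ℝ x z ⊆ S} := by
    have : {z : E | z ∈ segment ℝ c y ∧ segment ℝ x z ⊆ S} =
        segment ℝ c y ∩ {z : E | segment ℝ x z ⊆ S} := rfl
    rw [this]
    have hseg : IsCompact (segment ℝ c y) := by
      rw [segment_eq_image]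
      exact isCompact_Icc.image (by continuity)
    exact hseg.inter_right hclosed
  refine ⟨hcK, hKc, ?_⟩
  obtain ⟨zstar, hz, hmin⟩ := hKc.exists_isMinOn ⟨c, hcK⟩
    (Continuous.continuousOn (by continuity : Continuous fun z : E => ‖z - y‖))
  exact ⟨zstar, hz, fun z hzK => hmin hzK⟩
end

section
/- Let E be a real normed vector space, let F ⊆ E be any set, let R ≥ 0, and let a, b, c ∈ E satisfy ‖a − b‖ ≤ R, ‖a − c‖ ≤ R, and ‖b − c‖ ≤ R. For p ∈ E define Vis(p) := {x ∈ E : ‖x − p‖ ≤ R and segment[p,x] ⊆ F}. Then the following are equivalent: (i) convexHull ℝ {a, b, c} ⊆ F; (ii) segment[a,b] ⊆ Vis(c); (iii) segment[a,c] ⊆ Vis(b); (iv) segment[b,c] ⊆ Vis(a). -/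
private lemma key_scan {E : Type*} [NormedAddCommGroup E] [NormedSpace ℝ E]
    (F : Set E) (R : ℝ) (p q r : E)
    (hpq : ‖q - p‖ ≤ R) (hpr : ‖r - p‖ ≤ R) :
    convexHull ℝ {p, q, r} ⊆ F ↔
      segment ℝ q r ⊆ {x : E | ‖x - p‖ ≤ R ∧ segment ℝ p x ⊆ F} := by
  have hhull : convexHull ℝ ({p, q, r} : Set E) = ⋃ x ∈ segment ℝ q r, segment ℝ p x := by
    rw [convexHull_insert ⟨q, by simp⟩, convexHull_pair, convexJoin_singleton_left]
  constructor
  · intro hF x hx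
    refine ⟨?_, ?_⟩
    · have hq : q ∈ Metric.closedBall p R := by
        simpa [Metric.mem_closedBall, dist_eq_norm] using hpq
      have hr : r ∈ Metric.closedBall p R := by
        simpa [Metric.mem_closedBall, dist_eq_norm] using hpr
      have := (convex_closedBall p R).segment_subset hq hr hx
      simpa [Metric.mem_closedBall, dist_eq_norm] using this
    · intro y hy
      apply hF
      rw [hhull]
      exact Set.mem_biUnion hx hy
  · intro h
    rw [hhull]
    rintro y hy
    simp only [Set.mem_iUnion] at hy
    obtain ⟨x, hx, hy⟩ := hy
    exact (h hx).2 hy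

/-- Lemma 1 (safe convex hull of scan centers), idealized form: for scan centers
`a, b, c` within pairwise distance `R` of each other, safety of the triangle
`convexHull ℝ {a, b, c} ⊆ F` can equivalently be certified by any of the three
idealized scans `Vis(p) = {x : ‖x - p‖ ≤ R ∧ segment[p,x] ⊆ F}`. -/
theorem safe_convex_hull_of_scan_centers {E : Type*} [NormedAddCommGroup E]
    [NormedSpace ℝ E] (F : Set E) (R : ℝ) (hR : 0 ≤ R) (a b c : E)
    (hab : ‖a - b‖ ≤ R) (hac : ‖a - c‖ ≤ R) (hbc : ‖b - c‖ ≤ R) :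
    List.TFAE
      [convexHull ℝ {a, b, c} ⊆ F,
       segment ℝ a b ⊆ {x : E | ‖x - c‖ ≤ R ∧ segment ℝ c x ⊆ F},
       segment ℝ a c ⊆ {x : E | ‖x - b‖ ≤ R ∧ segment ℝ b x ⊆ F},
       segment ℝ b c ⊆ {x : E | ‖x - a‖ ≤ R ∧ segment ℝ a x ⊆ F}] := by
  have e1 : ({a, b, c} : Set E) = {c, a, b} := by ext x; simp; tauto
  have e2 : ({a, b, c} : Set E) = {b, a, c} := by ext x; simp; tauto
  have h2 := key_scan F R c a b (by simpa [norm_sub_rev] using hac)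
    (by simpa [norm_sub_rev] using hbc)
  have h3 := key_scan F R b a c hab (by simpa [norm_sub_rev] using hbc)
  have h4 := key_scan F R a b c (by simpa [norm_sub_rev] using hab) (by simpa [norm_sub_rev] using hac)
  rw [← e1] at h2
  rw [← e2] at h3
  tfae_have 1 ↔ 2 := h2
  tfae_have 1 ↔ 3 := h3
  tfae_have 1 ↔ 4 := h4
  tfae_finish
end

section
/- Let E be a real normed vector space, let ι be an index type, and let c : ι → E and S : ι → Set E be such that for every i, c(i) ∈ S(i) and S(i) is star-convex with center c(i). Let G be the simple graph on ι in which distinct i and j are adjacent if and only if c(i) ∈ S(j) and c(j) ∈ S(i). If G is connected, then for every i, j ∈ ι and every x ∈ S(i) and y ∈ S(j), the points x and y are joined by a continuous path lying inside ⋃_k S(k) (i.e., JoinedIn (⋃_k S(k)) x y holds). -/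
/-- Reachability core of Theorem 1: if the motion graph of star-convex regions
(adjacency = reciprocal inclusion of centers) is connected, then any two points of
the union of the regions are joined by a path inside the union. -/
theorem motion_graph_connected_joinedIn {E : Type*} [NormedAddCommGroup E]
    [NormedSpace ℝ E] {ι : Type*} (c : ι → E) (S : ι → Set E)
    (hc : ∀ i, c i ∈ S i)
    (hstar : ∀ i, ∀ y ∈ S i, segment ℝ (c i) y ⊆ S i)
    (G : SimpleGraph ι)
    (hG : ∀ i j : ι, G.Adj i j ↔ i ≠ j ∧ c i ∈ S j ∧ c j ∈ S i)
    (hconn : G.Connected) :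
    ∀ i j : ι, ∀ x ∈ S i, ∀ y ∈ S j, JoinedIn (⋃ k, S k) x y := by
  have hsub : ∀ i, S i ⊆ ⋃ k, S k := fun i => Set.subset_iUnion S i
  have hseg : ∀ i, ∀ x ∈ S i, JoinedIn (⋃ k, S k) (c i) x := by
    intro i x hx
    exact JoinedIn.of_segment_subset ((hstar i x hx).trans (hsub i))
  have hcc : ∀ i j : ι, JoinedIn (⋃ k, S k) (c i) (c j) := by
    intro i j
    obtain ⟨p⟩ := hconn i j
    induction p with
    | nil => exact JoinedIn.refl (hsub _ (hc _))
    | cons h p ih =>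
      rename_i a b d
      have hab := (hG a b).1 h
      exact (hseg a (c b) hab.2.2).trans ih
  intro i j x hx y hy
  exact ((hseg i x hx).symm.trans (hcc i j)).trans (hseg j y hy)
end

section
/- Let E be a real normed vector space, let ι be an index type, and let c : ι → E and S : ι → Set E be such that for every i, c(i) ∈ S(i) and S(i) is star-convex with center c(i). Fix k ∈ ι and let V̄ := {j ∈ ι : c(j) ∈ S(k) and c(k) ∈ S(j)}. Define the constrained graph Ḡ on V̄ by declaring distinct i, j ∈ V̄ adjacent if and only if c(i) ∈ S(j), c(j) ∈ S(i), segment[c(i),c(j)] ⊆ S(k), segment[c(k),c(i)] ⊆ S(j), and segment[c(k),c(j)] ⊆ S(i). Then k ∈ V̄, every j ∈ V̄ with j ≠ k is adjacent to k in Ḡ, and consequently Ḡ is a connected graph. -/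
/-- The motion graph constrained to an existing scan `k` is always connected: `k`
belongs to the constrained vertex set `V̄`, and every other constrained vertex is
adjacent to `k` in the constrained graph. -/
theorem scan_constrained_motion_graph_connected {E : Type*} [NormedAddCommGroup E]
    [NormedSpace ℝ E] {ι : Type*} (c : ι → E) (S : ι → Set E)
    (hc : ∀ i, c i ∈ S i)
    (hstar : ∀ i, ∀ y ∈ S i, segment ℝ (c i) y ⊆ S i)
    (k : ι) (V : Set ι) (hV : V = {j : ι | c j ∈ S k ∧ c k ∈ S j})
    (G : SimpleGraph V)
    (hG : ∀ i j : V, G.Adj i j ↔ (i : ι) ≠ (j : ι) ∧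
      c (i : ι) ∈ S (j : ι) ∧ c (j : ι) ∈ S (i : ι) ∧
      segment ℝ (c (i : ι)) (c (j : ι)) ⊆ S k ∧
      segment ℝ (c k) (c (i : ι)) ⊆ S (j : ι) ∧
      segment ℝ (c k) (c (j : ι)) ⊆ S (i : ι)) :
    ∃ hk : k ∈ V, (∀ j : V, (j : ι) ≠ k → G.Adj j ⟨k, hk⟩) ∧ G.Connected := by
  have hk : k ∈ V := by rw [hV]; exact ⟨hc k, hc k⟩
  refine ⟨hk, ?_⟩
  have hadj : ∀ j : V, (j : ι) ≠ k → G.Adj j ⟨k, hk⟩ := by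
    intro j hj
    obtain ⟨hjk, hkj⟩ : c (j : ι) ∈ S k ∧ c k ∈ S (j : ι) := by
      have h2 : (j : ι) ∈ {j : ι | c j ∈ S k ∧ c k ∈ S j} := by rw [← hV]; exact j.2
      exact h2
    rw [hG]
    have h1 : segment ℝ (c (j : ι)) (c k) ⊆ S k := by
      rw [segment_symm]; exact hstar k _ hjk
    have h2 : segment ℝ (c k) (c (j : ι)) ⊆ S (j : ι) := by
      rw [segment_symm]; exact hstar _ _ hkj
    have h3 : segment ℝ (c k) (c k) ⊆ S (j : ι) := by
      rw [segment_same]; intro x hx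
      rw [Set.mem_singleton_iff] at hx; subst hx; exact hkj
    have h4 : segment ℝ (c k) (c (j : ι)) ⊆ S k := hstar k _ hjk
    exact ⟨hj, hjk, hkj, h1, h4, h3⟩
  refine ⟨hadj, ?_⟩
  rw [SimpleGraph.connected_iff]
  refine ⟨?_, ⟨⟨k, hk⟩⟩⟩
  intro a b
  have key : ∀ a : V, G.Reachable a ⟨k, hk⟩ := by
    intro a
    by_cases ha : (a : ι) = k
    · have : a = ⟨k, hk⟩ := Subtype.ext ha
      rw [this]
    · exact (hadj a ha).reachable
  exact (key a).trans (key b).symm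
end
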